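/- Let G be a connected simple graph on a finite nonempty vertex set X. Then the collection C = {Y ⊆ X : Y ≠ ∅ and the subgraph of G induced on Y is connected} is bureaucratic. -/

import Mathlib

/-!
Extend a hierarchy `H ⊆ C` to an inclusion-maximal hierarchy `M ⊆ C`. Then every connected set
that nests with all members of `M` already lies in `M`; in particular `M` contains all singletons.
For a member `A` with at least two elements, the maximal members of `M` properly inside `A`
partition `A`, so the connectivity of `G[A]` yields an edge between two distinct blocks `T`, `T'`.
Their union is connected and nests with `M`, hence is a member, and maximality of the blocks
forces `T ∪ T' = A`. A hierarchy in which every non-singleton member is the disjoint union of two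
members is a binary tree with `|X|` leaves, so it has `2|X| - 1` members.
-/

/-- A hierarchy on a finite set `X` (here, the type `α`): a collection of
nonempty subsets of `X` containing `X` itself, in which any two members
intersect in `∅` or in one of the two members. -/
def IsHierarchy {α : Type*} [Fintype α] [DecidableEq α] (H : Finset (Finset α)) : Prop :=
  ∅ ∉ H ∧ Finset.univ ∈ H ∧
    ∀ A ∈ H, ∀ B ∈ H, A ∩ B = ∅ ∨ A ∩ B = A ∨ A ∩ B = B

/-- A hierarchy is maximum if it has cardinality `2|X| - 1`. -/
def IsMaximumHierarchy {α : Type*} [Fintype α] [DecidableEq α] (H : Finset (Finset α)) : Prop :=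
  IsHierarchy H ∧ H.card = 2 * Fintype.card α - 1

/-- A collection `C` of subsets of `X` is bureaucratic if it is nonempty, does not
contain `∅`, and every hierarchy contained in `C` extends to a maximum hierarchy
contained in `C`. -/
def IsBureaucratic {α : Type*} [Fintype α] [DecidableEq α] (C : Set (Finset α)) : Prop :=
  C.Nonempty ∧ ∅ ∉ C ∧
    ∀ H : Finset (Finset α), ↑H ⊆ C → IsHierarchy H →
      ∃ H' : Finset (Finset α), H ⊆ H' ∧ ↑H' ⊆ C ∧ IsMaximumHierarchy H'

open Finset

lemma SimpleGraph.exists_adj_of_induce_connected {V : Type*} {G : SimpleGraph V} {s t : Set V}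
    (hs : (G.induce s).Connected) (hst : (s ∩ t).Nonempty) (hs_t : (s \ t).Nonempty) :
    ∃ u ∈ t, ∃ v ∈ s \ t, G.Adj u v := by
  obtain ⟨x, hxs, hxt⟩ := hst
  obtain ⟨y, hys, hyt⟩ := hs_t
  obtain ⟨w⟩ := hs.preconnected ⟨x, hxs⟩ ⟨y, hys⟩
  obtain ⟨d, -, hd₁, hd₂⟩ := w.exists_boundary_dart {z | z.1 ∈ t} hxt hyt
  exact ⟨d.fst, hd₁, d.snd, ⟨d.snd.2, hd₂⟩, d.adj⟩

section Hierarchy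

variable {α : Type*} {M : Finset (Finset α)} {A B D E T T' : Finset α}

def IsLaminarWith (M : Finset (Finset α)) (B : Finset α) : Prop :=
  ∀ E ∈ M, Disjoint E B ∨ E ⊆ B ∨ B ⊆ E

lemma isLaminarWith_singleton (M : Finset (Finset α)) (x : α) : IsLaminarWith M {x} := by
  intro E _
  by_cases hx : x ∈ E
  · exact Or.inr (Or.inr (singleton_subset_iff.2 hx))
  · exact Or.inl (disjoint_singleton_right.2 hx)

variable [DecidableEq α]

def IsBinary (M : Finset (Finset α)) : Prop :=
  ∀ A ∈ M, 1 < #A → ∃ B ∈ M, ∃ D ∈ M, Disjoint B D ∧ B ∪ D = A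

lemma Finset.inter_eq_empty_or_left_or_right_iff :
    (A ∩ B = ∅ ∨ A ∩ B = A ∨ A ∩ B = B) ↔ (Disjoint A B ∨ A ⊆ B ∨ B ⊆ A) := by
  rw [disjoint_iff_inter_eq_empty, inter_eq_left, inter_eq_right]

variable [Fintype α]

namespace IsHierarchy

lemma nonempty_of_mem (hM : IsHierarchy M) (hE : E ∈ M) : E.Nonempty :=
  nonempty_iff_ne_empty.2 fun h => hM.1 (h ▸ hE)

lemma isLaminarWith (hM : IsHierarchy M) (hB : B ∈ M) : IsLaminarWith M B :=
  fun E hE => inter_eq_empty_or_left_or_right_iff.1 (hM.2.2 E hE B hB)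

protected lemma insert (hM : IsHierarchy M) (hB : B.Nonempty) (hBM : IsLaminarWith M B) :
    IsHierarchy (insert B M) := by
  refine ⟨?_, mem_insert_of_mem hM.2.1, ?_⟩
  · rw [mem_insert, not_or]
    exact ⟨hB.ne_empty.symm, hM.1⟩
  · simp only [inter_eq_empty_or_left_or_right_iff, forall_mem_insert]
    refine ⟨⟨by simp, fun F hF => ?_⟩,
      fun E hE => ⟨hBM E hE, fun F hF => hM.isLaminarWith hF E hE⟩⟩
    rcases hBM F hF with h | h | h
    exacts [Or.inl h.symm, Or.inr (Or.inr h), Or.inr (Or.inl h)]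

lemma subset_of_maximal_ssubset (hM : IsHierarchy M)
    (hT : Maximal (fun X => X ∈ M ∧ X ⊂ A) T) (hE : E ∈ M) (hEA : E ⊂ A)
    (hET : ¬Disjoint E T) : E ⊆ T := by
  rcases hM.isLaminarWith hT.1.1 E hE with h | h | h
  exacts [absurd h hET, h, hT.2 ⟨hE, hEA⟩ h]

lemma isLaminarWith_union_of_maximal_ssubset (hM : IsHierarchy M) (hA : A ∈ M)
    (hT : Maximal (fun X => X ∈ M ∧ X ⊂ A) T)
    (hT' : Maximal (fun X => X ∈ M ∧ X ⊂ A) T') :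
    IsLaminarWith M (T ∪ T') := by
  have hsub : T ∪ T' ⊆ A := union_subset hT.1.2.subset hT'.1.2.subset
  intro E hE
  rcases hM.isLaminarWith hA E hE with h | h | h
  · exact Or.inl (h.mono_right hsub)
  · obtain rfl | hEA := h.eq_or_ssubset
    · exact Or.inr (Or.inr hsub)
    by_cases hET : Disjoint E T
    · by_cases hET' : Disjoint E T'
      · exact Or.inl (disjoint_union_right.2 ⟨hET, hET'⟩)
      · exact Or.inr (Or.inl
          ((hM.subset_of_maximal_ssubset hT' hE hEA hET').trans subset_union_right))
    · exact Or.inr (Or.inl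
        ((hM.subset_of_maximal_ssubset hT hE hEA hET).trans subset_union_left))
  · exact Or.inr (Or.inr (hsub.trans h))

lemma eq_or_subset_or_subset_of_subset_union (hM : IsHierarchy M) (hE : E ∈ M) (hB : B ∈ M)
    (hD : D ∈ M) (hEBD : E ⊆ B ∪ D) : E = B ∪ D ∨ E ⊆ B ∨ E ⊆ D := by
  rcases hM.isLaminarWith hB E hE with hEB | hEB | hBE
  · exact Or.inr (Or.inr (hEB.left_le_of_le_sup_left hEBD))
  · exact Or.inr (Or.inl hEB)
  rcases hM.isLaminarWith hD E hE with hED | hED | hDE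
  · exact Or.inr (Or.inl (hED.left_le_of_le_sup_right hEBD))
  · exact Or.inr (Or.inr hED)
  · exact Or.inl (hEBD.antisymm (union_subset hBE hDE))

lemma filter_subset_union_eq (hM : IsHierarchy M) (hB : B ∈ M) (hD : D ∈ M)
    (hBDM : B ∪ D ∈ M) :
    M.filter (· ⊆ B ∪ D) = insert (B ∪ D) (M.filter (· ⊆ B) ∪ M.filter (· ⊆ D)) := by
  ext E
  simp only [mem_filter, mem_insert, mem_union]
  constructor
  · rintro ⟨hE, hEBD⟩
    rcases hM.eq_or_subset_or_subset_of_subset_union hE hB hD hEBD with h | h | h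
    exacts [Or.inl h, Or.inr (Or.inl ⟨hE, h⟩), Or.inr (Or.inr ⟨hE, h⟩)]
  · rintro (rfl | ⟨hE, h⟩ | ⟨hE, h⟩)
    exacts [⟨hBDM, subset_rfl⟩, ⟨hE, h.trans subset_union_left⟩,
      ⟨hE, h.trans subset_union_right⟩]

lemma card_filter_subset (hM : IsHierarchy M) (hbin : IsBinary M) {S : Finset α} (hS : S ∈ M) :
    #(M.filter (· ⊆ S)) = 2 * #S - 1 := by
  induction S using Finset.strongInduction with
  | H S ih =>
    rcases le_or_gt #S 1 with hS1 | hS1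
    · obtain ⟨x, rfl⟩ := card_eq_one.1 (le_antisymm hS1 (hM.nonempty_of_mem hS).card_pos)
      have hfilter : M.filter (· ⊆ {x}) = {{x}} := by
        ext E
        simp only [mem_filter, mem_singleton]
        refine ⟨fun ⟨hE, hEx⟩ => (hM.nonempty_of_mem hE).subset_singleton_iff.1 hEx, ?_⟩
        rintro rfl
        exact ⟨hS, subset_rfl⟩
      rw [hfilter]
      simp
    obtain ⟨B, hB, D, hD, hBD, rfl⟩ := hbin S hS hS1
    have hBne := hM.nonempty_of_mem hB
    have hDne := hM.nonempty_of_mem hD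
    have hBS : B ⊂ B ∪ D :=
      ssubset_of_subset_of_ne subset_union_left fun h => hDne.ne_empty
        (disjoint_self.1 (hBD.mono_left (h ▸ subset_union_right)).symm)
    have hDS : D ⊂ B ∪ D :=
      ssubset_of_subset_of_ne subset_union_right fun h => hBne.ne_empty
        (disjoint_self.1 (hBD.mono_right (h ▸ subset_union_left)))
    have hnotMem : B ∪ D ∉ M.filter (· ⊆ B) ∪ M.filter (· ⊆ D) := by
      simp only [mem_union, mem_filter, not_or, not_and]
      exact ⟨fun _ h => hBS.not_subset h, fun _ h => hDS.not_subset h⟩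
    have hdisj : Disjoint (M.filter (· ⊆ B)) (M.filter (· ⊆ D)) := by
      refine disjoint_filter.2 fun E hE hEB hED => (hM.nonempty_of_mem hE).ne_empty ?_
      exact disjoint_self.1 (hBD.mono hEB hED)
    rw [hM.filter_subset_union_eq hB hD hS, card_insert_of_notMem hnotMem,
      card_union_of_disjoint hdisj, ih B hBS hB, ih D hDS hD, card_union_of_disjoint hBD]
    have := hBne.card_pos
    have := hDne.card_pos
    omega

lemma isMaximumHierarchy (hM : IsHierarchy M) (hbin : IsBinary M) : IsMaximumHierarchy M := by
  refine ⟨hM, ?_⟩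
  simpa [filter_true_of_mem] using hM.card_filter_subset hbin hM.2.1

lemma isBinary_of_connected (G : SimpleGraph α) (hM : IsHierarchy M)
    (hconn : ∀ E ∈ M, (G.induce (E : Set α)).Connected) (hsing : ∀ x, {x} ∈ M)
    (hclosed : ∀ B : Finset α, (G.induce (B : Set α)).Connected → IsLaminarWith M B →
      B ∈ M) :
    IsBinary M := by
  intro A hA hA1
  have block : ∀ x ∈ A, ∃ T, x ∈ T ∧ Maximal (fun X => X ∈ M ∧ X ⊂ A) T := by
    intro x hx
    have hxA : {x} ⊂ A := ssubset_of_subset_of_ne (singleton_subset_iff.2 hx)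
      (by rintro rfl; simp at hA1)
    obtain ⟨T, hxT, hT⟩ :=
      Finite.exists_le_maximal (p := fun X => X ∈ M ∧ X ⊂ A) ⟨hsing x, hxA⟩
    exact ⟨T, singleton_subset_iff.1 hxT, hT⟩
  obtain ⟨x, hx⟩ := card_pos.1 (by omega : 0 < #A)
  obtain ⟨T, hxT, hT⟩ := block x hx
  obtain ⟨y, hyA, hyT⟩ := exists_of_ssubset hT.1.2
  obtain ⟨u, huT, v, ⟨hvA, hvT⟩, huv⟩ :=
    SimpleGraph.exists_adj_of_induce_connected (hconn A hA) ⟨x, mem_coe.2 hx, mem_coe.2 hxT⟩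
      ⟨y, mem_coe.2 hyA, mem_coe.1.mt hyT⟩
  obtain ⟨T', hvT', hT'⟩ := block v hvA
  have hTT' : Disjoint T T' := by
    by_contra h
    exact hvT (hM.subset_of_maximal_ssubset hT hT'.1.1 hT'.1.2 (disjoint_comm.not.1 h) hvT')
  have hunion : T ∪ T' ∈ M := by
    refine hclosed _ ?_ (hM.isLaminarWith_union_of_maximal_ssubset hA hT hT')
    rw [coe_union]
    exact SimpleGraph.connected_induce_union (hconn T hT.1.1).preconnected
      (hconn T' hT'.1.1).preconnected huT hvT' huv
  refine ⟨T, hT.1.1, T', hT'.1.1, hTT', ?_⟩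
  by_contra hne
  have hsub : T ∪ T' ⊆ T := hM.subset_of_maximal_ssubset hT hunion
    (ssubset_of_subset_of_ne (union_subset hT.1.2.subset hT'.1.2.subset) hne)
    (not_disjoint_iff.2 ⟨x, mem_union_left _ hxT, hxT⟩)
  exact hvT (hsub (mem_union_right _ hvT'))

end IsHierarchy

lemma mem_of_isLaminarWith_of_maximal {C : Set (Finset α)}
    (hM : Maximal (fun N : Finset (Finset α) => IsHierarchy N ∧ ↑N ⊆ C) M)
    (hB : B ∈ C) (hBne : B.Nonempty) (hBM : IsLaminarWith M B) : B ∈ M := by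
  have hins : IsHierarchy (insert B M) ∧ ↑(insert B M) ⊆ C := by
    refine ⟨hM.1.1.insert hBne hBM, ?_⟩
    rw [coe_insert, Set.insert_subset_iff]
    exact ⟨hB, hM.1.2⟩
  exact hM.2 hins (subset_insert B M) (mem_insert_self B M)

lemma isBureaucratic_of_maximal {C : Set (Finset α)} (hC : C.Nonempty) (hC₀ : ∅ ∉ C)
    (hmax : ∀ M, Maximal (fun N : Finset (Finset α) => IsHierarchy N ∧ ↑N ⊆ C) M →
      IsMaximumHierarchy M) :
    IsBureaucratic C := by
  refine ⟨hC, hC₀, fun H hHC hH => ?_⟩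
  obtain ⟨M, hHM, hM⟩ := Finite.exists_le_maximal
    (p := fun N : Finset (Finset α) => IsHierarchy N ∧ ↑N ⊆ C) ⟨hH, hHC⟩
  exact ⟨M, hHM, hM.1.2, hmax M hM⟩

end Hierarchy

theorem connectedSubsets_bureaucratic_general {α : Type*} [Fintype α] [DecidableEq α]
    (G : SimpleGraph α) (hG : G.Connected) :
    IsBureaucratic {Y : Finset α | Y.Nonempty ∧ (G.induce (Y : Set α)).Connected} := by
  have huniv : (G.induce ((univ : Finset α) : Set α)).Connected := by
    rw [coe_univ]
    exact G.induceUnivIso.connected_iff.2 hG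
  refine isBureaucratic_of_maximal ⟨univ, univ_nonempty_iff.2 hG.nonempty, huniv⟩
    (fun h => not_nonempty_empty h.1) fun M hM => ?_
  have hclosed (B : Finset α) (hB : (G.induce (B : Set α)).Connected) (hBM : IsLaminarWith M B) :
      B ∈ M := by
    have hBne : B.Nonempty := coe_nonempty.1 (Set.nonempty_coe_sort.1 hB.nonempty)
    exact mem_of_isLaminarWith_of_maximal hM ⟨hBne, hB⟩ hBne hBM
  have hsing (x : α) : {x} ∈ M := by
    refine hclosed {x} ?_ (isLaminarWith_singleton M x)
    rw [coe_singleton, SimpleGraph.induce_singleton_eq_top]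
    exact SimpleGraph.connected_top
  exact hM.1.1.isMaximumHierarchy
    (hM.1.1.isBinary_of_connected G (fun E hE => (hM.1.2 hE).2) hsing hclosed)

/-- For a connected graph `G` on a finite nonempty vertex set, the collection of nonempty
vertex subsets inducing a connected subgraph is bureaucratic. -/
theorem connectedSubsets_bureaucratic {α : Type*} [Fintype α] [DecidableEq α] [Nonempty α]
    (G : SimpleGraph α) (hG : G.Connected) :
    IsBureaucratic {Y : Finset α | Y.Nonempty ∧ (G.induce (Y : Set α)).Connected} :=
  connectedSubsets_bureaucratic_general G hG
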